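/- arXiv:2204.04979 — 4 statements merged into one kernel-verified Lean document; each statement's English description precedes it below -/
import Mathlib

section
/- A Lie algebra of polynomial vector fields on ℝⁿ generated by finitely many weighted-homogeneous vector fields of nonholonomic degree 0 or −1 is finite dimensional: every element is a polynomial vector field whose coefficient of ∂/∂xⱼ has total weighted degree at most wⱼ, hence lies in a fixed finite-dimensional space of polynomial vector fields. -/
/-!
The fields whose coefficient of ∂/∂xⱼ has weighted degree at most wⱼ (nonholonomic degree ≤ 0)
form a subspace containing the generators. It is closed under brackets because the term
`Xₖ ∂ₖ Yⱼ` has weighted degree at most `wₖ + (wⱼ - wₖ)`, and it is finite-dimensional because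
positive weights leave only finitely many monomials of bounded weight.
-/

/-- Polynomial vector fields on ℝⁿ: an `n`-tuple of polynomial coefficients. -/
noncomputable def bracketVF {n : ℕ} (X Y : Fin n → MvPolynomial (Fin n) ℝ) :
    Fin n → MvPolynomial (Fin n) ℝ :=
  fun j => ∑ k : Fin n,
    (X k * MvPolynomial.pderiv k (Y j) - Y k * MvPolynomial.pderiv k (X j))

/-- `X` is weighted-homogeneous of nonholonomic degree `s` for the weights `w`:
each coefficient `X j` is weighted-homogeneous of weighted degree `w j + s`. -/
def IsWHomVF {n : ℕ} (w : Fin n → ℕ) (s : ℤ)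
    (X : Fin n → MvPolynomial (Fin n) ℝ) : Prop :=
  ∀ j, MvPolynomial.IsWeightedHomogeneous (fun i => (w i : ℤ)) (X j) ((w j : ℤ) + s)

open Finsupp

namespace MvPolynomial

variable {σ : Type*} (R : Type*) [CommSemiring R]

noncomputable abbrev weightedDegreeLE (w : σ → ℕ) (m : ℕ) : Submodule R (MvPolynomial σ R) :=
  restrictSupport R {d | weight w d ≤ m}

variable {R} {w : σ → ℕ} {m : ℕ} {p q : MvPolynomial σ R}

lemma finite_weightedDegreeLE [Finite σ] (hw : ∀ i, w i ≠ 0) (m : ℕ) :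
    Module.Finite R (weightedDegreeLE R w m) :=
  have : Finite {d : σ →₀ ℕ | weight w d ≤ m} := (finite_of_nat_weight_le w hw m).to_subtype
  .of_basis (basisRestrictSupport R _)

lemma weight_add_le_of_mem_support_pderiv {i : σ} {d : σ →₀ ℕ}
    (hp : p ∈ weightedDegreeLE R w m) (hd : d ∈ (pderiv i p).support) :
    weight w d + w i ≤ m := by
  have hcoeff : coeff (d + single i 1) p ≠ 0 := by
    intro h
    simp [coeff_pderiv, h] at hd
  simpa [weight_single] using hp (mem_support_iff.mpr hcoeff)

lemma mul_pderiv_mem_weightedDegreeLE {i : σ} (hq : q ∈ weightedDegreeLE R w (w i))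
    (hp : p ∈ weightedDegreeLE R w m) : q * pderiv i p ∈ weightedDegreeLE R w m := by
  classical
  intro d hd
  obtain ⟨d₁, hd₁, d₂, hd₂, rfl⟩ := Finset.mem_add.mp (support_mul _ _ hd)
  have h₁ : weight w d₁ ≤ w i := hq hd₁
  have h₂ := weight_add_le_of_mem_support_pderiv hp hd₂
  simp only [Set.mem_ofPred_eq, map_add]
  omega

lemma IsWeightedHomogeneous.mem_weightedDegreeLE {e : ℤ}
    (hp : IsWeightedHomogeneous (fun i => (w i : ℤ)) p e) (he : e ≤ m) :
    p ∈ weightedDegreeLE R w m := by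
  intro d hd
  have hcast : (weight w d : ℤ) = weight (fun i => (w i : ℤ)) d := by
    simp [weight_apply, Finsupp.sum]
  have := hp (mem_support_iff.mp hd)
  change weight w d ≤ m
  omega

end MvPolynomial

open MvPolynomial

noncomputable def nonposDegreeVF {n : ℕ} (w : Fin n → ℕ) :
    Submodule ℝ (Fin n → MvPolynomial (Fin n) ℝ) :=
  Submodule.pi Set.univ fun j => weightedDegreeLE ℝ w (w j)

section

variable {n : ℕ} {w : Fin n → ℕ}

lemma finiteDimensional_nonposDegreeVF (hw : ∀ i, 1 ≤ w i) :
    FiniteDimensional ℝ (nonposDegreeVF w) := by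
  have (j : Fin n) : Module.Finite ℝ (weightedDegreeLE ℝ w (w j)) :=
    finite_weightedDegreeLE (fun i => Nat.one_le_iff_ne_zero.mp (hw i)) _
  classical
  rw [nonposDegreeVF, ← Submodule.iSup_map_single]
  infer_instance

lemma IsWHomVF.mem_nonposDegreeVF {s : ℤ} {X : Fin n → MvPolynomial (Fin n) ℝ}
    (hX : IsWHomVF w s X) (hs : s ≤ 0) : X ∈ nonposDegreeVF w :=
  fun j _ => (hX j).mem_weightedDegreeLE (by omega)

lemma bracketVF_mem_nonposDegreeVF {X Y : Fin n → MvPolynomial (Fin n) ℝ}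
    (hX : X ∈ nonposDegreeVF w) (hY : Y ∈ nonposDegreeVF w) :
    bracketVF X Y ∈ nonposDegreeVF w := fun j _ =>
  Submodule.sum_mem _ fun k _ => Submodule.sub_mem _
    (mul_pderiv_mem_weightedDegreeLE (hX k trivial) (hY j trivial))
    (mul_pderiv_mem_weightedDegreeLE (hY k trivial) (hX j trivial))

end

/-- A Lie algebra of polynomial vector fields on ℝⁿ generated by finitely many
weighted-homogeneous vector fields of nonholonomic degree `0` or `-1` is finite
dimensional: there is a finite-dimensional subspace of polynomial vector fields
containing the generators and closed under the Lie bracket (hence containing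
the generated Lie algebra). -/
theorem stmt_6 {n : ℕ} (w : Fin n → ℕ) (hw : ∀ i, 1 ≤ w i)
    (k : ℕ) (X : Fin k → (Fin n → MvPolynomial (Fin n) ℝ))
    (hX : ∀ i, IsWHomVF w 0 (X i) ∨ IsWHomVF w (-1) (X i)) :
    ∃ W : Submodule ℝ (Fin n → MvPolynomial (Fin n) ℝ),
      FiniteDimensional ℝ W ∧ (∀ i, X i ∈ W) ∧
      ∀ Y ∈ W, ∀ Z ∈ W, bracketVF Y Z ∈ W :=
  ⟨nonposDegreeVF w, finiteDimensional_nonposDegreeVF hw,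
    fun i => (hX i).elim (·.mem_nonposDegreeVF le_rfl) (·.mem_nonposDegreeVF (by norm_num)),
    fun _ hY _ hZ => bracketVF_mem_nonposDegreeVF hY hZ⟩
end

section
/- Consider the linear ODE system on ℝⁿ in triangular form: for each j, xⱼ' = Pⱼ(x) where Pⱼ depends linearly on the coordinates of weight wⱼ and polynomially only on coordinates of weight strictly less than wⱼ. Then every maximal solution of this system is defined on all of ℝ; i.e., a weighted-homogeneous polynomial vector field of nonholonomic degree 0 is complete. -/
/-!
With positive weights the system is triangular: a monomial of weighted degree `w j` is either a
single variable of weight `w j` or involves only variables of smaller weight. So once the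
coordinates of weight `< d` are known on all of `ℝ`, those of weight `d` solve a linear system
`ẏ = A y + b(t)` with continuous forcing, which has a global solution by variation of constants.
Induction on the weight level `d` gives a global solution of the whole system.
-/

open MvPolynomial Finsupp NormedSpace

theorem exists_forall_hasDerivAt_clm_apply_add {E : Type*} [NormedAddCommGroup E]
    [NormedSpace ℝ E] [CompleteSpace E] (A : E →L[ℝ] E) {b : ℝ → E} (hb : Continuous b) (x₀ : E) :
    ∃ x : ℝ → E, x 0 = x₀ ∧ ∀ t, HasDerivAt x (A (x t) + b t) t := by
  -- `exp` is defined through a `ℚ`-algebra structure, not an instance on `E →L[ℝ] E`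
  let +nondep : NormedAlgebra ℚ (E →L[ℝ] E) := .restrictScalars ℚ ℝ _
  set U : ℝ → E →L[ℝ] E := fun t => exp (t • A)
  have hU : ∀ t, HasDerivAt U (A * U t) t := hasDerivAt_exp_smul_const' A
  have hU_mul_neg : ∀ t, U t * U (-t) = 1 := fun t => by
    rw [← exp_add_of_commute (((Commute.refl A).smul_left t).smul_right (-t)), neg_smul,
      add_neg_cancel, exp_zero]
  have hv : Continuous fun s => U (-s) (b s) :=
    (exp_continuous.comp (continuous_neg.smul continuous_const)).clm_apply hb
  refine ⟨fun t => U t (x₀ + ∫ s in (0)..t, U (-s) (b s)), by simp [U], fun t => ?_⟩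
  convert (hU t).clm_apply ((hv.integral_hasStrictDerivAt 0 t).hasDerivAt.const_add x₀) using 1
  rw [← mul_apply_eq_comp (U t), hU_mul_neg, mul_apply_eq_comp]
  rfl

section WeightedHomogeneous

variable {σ M R : Type*} [AddCommMonoid M] [LinearOrder M] [IsOrderedCancelAddMonoid M]
  {w : σ → M}

theorem Finsupp.eq_single_one_of_weight_le (hw : ∀ i, 0 < w i) {α : σ →₀ ℕ} {k : σ}
    (hk : α k ≠ 0) (h : weight w α ≤ w k) : α = single k 1 := by
  have hrest : weight w (α - single k 1) ≤ 0 := by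
    rw [← weight_sub_single_add hk] at h
    exact add_le_iff_nonpos_left.mp h
  suffices α - single k 1 = 0 by rw [← sub_add_single_one_cancel hk, this, zero_add]
  ext i
  by_contra hi
  exact (hw i).not_ge ((le_weight_of_ne_zero (fun j => (hw j).le) hi).trans hrest)

variable [Fintype σ] [CommSemiring R] {p : MvPolynomial σ R} {d : M}

theorem MvPolynomial.IsWeightedHomogeneous.eval_eq_eval_indicator_add (hw : ∀ i, 0 < w i)
    (hp : IsWeightedHomogeneous w p d) (x : σ → R) :
    eval x p = eval ({i | w i < d}.indicator x) p
      + ∑ k with w k = d, coeff (single k 1) p * x k := by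
  classical
  rw [p.as_sum]
  simp only [map_sum, coeff_sum, Finset.sum_mul]
  rw [Finset.sum_comm, ← Finset.sum_add_distrib]
  refine Finset.sum_congr rfl fun α hα => ?_
  have hαd : weight w α = d := hp (MvPolynomial.mem_support_iff.mp hα)
  simp only [coeff_monomial, ite_mul, zero_mul, eval_monomial]
  by_cases hlow : ∀ i ∈ α.support, w i < d
  · have hx : α.prod (fun i e => {i | w i < d}.indicator x i ^ e)
        = α.prod (fun i e => x i ^ e) :=
      Finsupp.prod_congr fun i hi => by simp [hlow i hi]
    have hnotlin : ∀ k, w k = d → α ≠ single k 1 := by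
      rintro k hkd rfl
      exact (hlow k (by simp)).ne hkd
    rw [hx, Finset.sum_eq_zero fun k hk => if_neg (hnotlin k (Finset.mem_filter.mp hk).2),
      add_zero]
  · push Not at hlow
    obtain ⟨k, hk, hdk⟩ := hlow
    obtain rfl := eq_single_one_of_weight_le hw (Finsupp.mem_support_iff.mp hk) (hαd ▸ hdk)
    have hkd : w k = d := by simpa [weight_single] using hαd
    simp [hkd, Finsupp.single_left_inj]

theorem MvPolynomial.IsWeightedHomogeneous.eval_congr (hw : ∀ i, 0 < w i)
    (hp : IsWeightedHomogeneous w p d) {x y : σ → R} (hxy : ∀ i, w i ≤ d → x i = y i) :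
    eval x p = eval y p := by
  have hlow : {i | w i < d}.indicator x = {i | w i < d}.indicator y :=
    Set.indicator_congr fun i hi => hxy i (le_of_lt hi)
  rw [hp.eval_eq_eval_indicator_add hw, hp.eval_eq_eval_indicator_add hw y, hlow]
  exact congrArg _ <|
    Finset.sum_congr rfl fun k hk => by rw [hxy k (Finset.mem_filter.mp hk).2.le]

end WeightedHomogeneous

section TriangularSystem

variable {σ : Type*} [Fintype σ] {w : σ → ℤ} {X : σ → MvPolynomial σ ℝ}

def SolvesBelow (w : σ → ℤ) (X : σ → MvPolynomial σ ℝ) (d : ℤ) (f : ℝ → σ → ℝ) : Prop :=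
  ∀ j, w j < d → ∀ t, HasDerivAt (fun t => f t j) (eval (f t) (X j)) t

theorem SolvesBelow.exists_succ (hw : ∀ i, 0 < w i)
    (hX : ∀ j, IsWeightedHomogeneous w (X j) (w j)) {d : ℤ} {f : ℝ → σ → ℝ}
    (hf : SolvesBelow w X d f) : ∃ g, g 0 = f 0 ∧ SolvesBelow w X (d + 1) g := by
  classical
  set lower : ℝ → σ → ℝ := fun t => {i | w i < d}.indicator (f t)
  have hlower : Continuous lower := continuous_pi fun i => by
    by_cases hi : w i < d
    · simpa [lower, hi] using continuous_iff_continuousAt.2 fun t => (hf i hi t).continuousAt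
    · simp [lower, hi, continuous_const]
  set b : ℝ → σ → ℝ := fun t j => if w j = d then eval (lower t) (X j) else 0
  have hb : Continuous b := continuous_pi fun j => by
    by_cases hj : w j = d
    · simp only [b, hj, if_true]
      exact (continuous_eval (X j)).comp hlower
    · simp [b, hj, continuous_const]
  -- `ẏ = A y + b t` is the weight-`d` block of the system along `f`; `y` keeps the coordinates
  -- of weight `> d` constant.
  set A : (σ → ℝ) →L[ℝ] (σ → ℝ) := LinearMap.toContinuousLinearMap (Matrix.mulVecLin
    (Matrix.of fun j k => if w j = d ∧ w k = d then coeff (single k 1) (X j) else 0))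
  obtain ⟨y, hy0, hy⟩ := exists_forall_hasDerivAt_clm_apply_add A hb (f 0)
  refine ⟨fun t j => if w j < d then f t j else y t j, ?_, fun j hj t => ?_⟩
  · ext j
    by_cases hj : w j < d <;> simp [hj, hy0]
  rcases (Int.lt_add_one_iff.mp hj).lt_or_eq with hjd | hjd
  · simp only [hjd, if_true]
    convert hf j hjd t using 1
    exact (hX j).eval_congr hw fun i hi => by simp [hi.trans_lt hjd]
  · simp only [hjd, lt_irrefl, if_false]
    refine (hasDerivAt_pi.mp (hy t) j).congr_deriv ?_
    have hlow :
        {i | w i < d}.indicator (fun i => if w i < d then f t i else y t i) = lower t :=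
      Set.indicator_congr fun i hi => if_pos hi
    rw [(hX j).eval_eq_eval_indicator_add hw, hjd, hlow, add_comm]
    simp +contextual [A, b, hjd, Matrix.mulVec, dotProduct, Finset.sum_filter]

theorem exists_solvesBelow (hw : ∀ i, 0 < w i) (hX : ∀ j, IsWeightedHomogeneous w (X j) (w j))
    (x₀ : σ → ℝ) (d : ℕ) : ∃ f, f 0 = x₀ ∧ SolvesBelow w X d f := by
  induction d with
  | zero => exact ⟨fun _ => x₀, rfl, fun j hj => absurd hj (hw j).not_gt⟩
  | succ d ih =>
    obtain ⟨f, hf0, hf⟩ := ih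
    obtain ⟨g, hg0, hg⟩ := hf.exists_succ hw hX
    exact ⟨g, hg0.trans hf0, by simpa using hg⟩

theorem exists_forall_hasDerivAt_eval_of_isWeightedHomogeneous (hw : ∀ i, 0 < w i)
    (hX : ∀ j, IsWeightedHomogeneous w (X j) (w j)) (x₀ : σ → ℝ) :
    ∃ f : ℝ → σ → ℝ, f 0 = x₀ ∧ ∀ t, HasDerivAt f (fun j => eval (f t) (X j)) t := by
  obtain ⟨B, hB⟩ := (Set.finite_range w).bddAbove
  obtain ⟨d, hd⟩ := exists_nat_gt B
  obtain ⟨f, hf0, hf⟩ := exists_solvesBelow hw hX x₀ d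
  exact ⟨f, hf0, fun t => hasDerivAt_pi.2 fun j => hf j ((hB ⟨j, rfl⟩).trans_lt hd) t⟩

end TriangularSystem

/-- A weighted-homogeneous polynomial vector field of nonholonomic degree `0`
(for positive weights) is complete: every initial value problem has a global
solution defined on all of ℝ. -/
theorem stmt_7 {n : ℕ} (w : Fin n → ℕ) (hw : ∀ i, 1 ≤ w i)
    (X : Fin n → MvPolynomial (Fin n) ℝ) (hX : IsWHomVF w 0 X) :
    ∀ x0 : Fin n → ℝ, ∃ f : ℝ → (Fin n → ℝ), f 0 = x0 ∧
      ∀ t : ℝ, HasDerivAt f (fun j => MvPolynomial.eval (f t) (X j)) t :=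
  exists_forall_hasDerivAt_eval_of_isWeightedHomogeneous (w := fun i => (w i : ℤ))
    (fun i => Int.natCast_pos.mpr (hw i)) (fun j => by simpa using hX j)
end

section
/- In the example on ℝ⁴ with X₁ = ∂_x, X₂ = ∂_y + x∂_z, X₃ = y∂_w, X₄ = x∂_z + (1/2) y² ∂_w, one has [X₂, X₄] = X₃; consequently X₃ belongs to the ideal generated by X₁ and X₂ in the Lie algebra generated by X₁, X₂, X₃, X₄, even though X₃ vanishes at the origin while X₁(0), X₂(0) are linearly independent. -/
open MvPolynomial in
/-- On ℝ⁴ with `X₁ = ∂ₓ`, `X₂ = ∂_y + x∂_z`, `X₃ = y∂_w`,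
`X₄ = x∂_z + ½ y² ∂_w`, one has `[X₂, X₄] = X₃`; consequently `X₃` belongs to
the ideal generated by `X₁, X₂`, even though `X₃` vanishes at the origin while
`X₁(0), X₂(0)` are linearly independent. -/
theorem stmt_12
    (X1 : Fin 4 → MvPolynomial (Fin 4) ℝ) (hX1 : X1 = ![1, 0, 0, 0])
    (X2 : Fin 4 → MvPolynomial (Fin 4) ℝ) (hX2 : X2 = ![0, 1, X 0, 0])
    (X3 : Fin 4 → MvPolynomial (Fin 4) ℝ) (hX3 : X3 = ![0, 0, 0, X 1])
    (X4 : Fin 4 → MvPolynomial (Fin 4) ℝ)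
    (hX4 : X4 = ![0, 0, X 0, C (1/2 : ℝ) * (X 1) ^ 2]) :
    bracketVF X2 X4 = X3 ∧
    (fun j => eval (0 : Fin 4 → ℝ) (X3 j)) = 0 ∧
    LinearIndependent ℝ
      ![fun j => eval (0 : Fin 4 → ℝ) (X1 j), fun j => eval (0 : Fin 4 → ℝ) (X2 j)] ∧
    (∀ I : Submodule ℝ (Fin 4 → MvPolynomial (Fin 4) ℝ),
      X1 ∈ I → X2 ∈ I → (∀ Y ∈ I, bracketVF Y X4 ∈ I) → X3 ∈ I) := by
  have hbr : bracketVF X2 X4 = X3 := by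
    subst hX2 hX3 hX4
    funext j
    unfold bracketVF
    fin_cases j <;>
      simp [Fin.sum_univ_four, pderiv_X, Pi.single_apply] <;>
      ring_nf <;>
      rw [mul_right_comm, show (C (1/2:ℝ) : MvPolynomial (Fin 4) ℝ) * 2 = 1 by
        rw [← map_ofNat (C : ℝ →+* MvPolynomial (Fin 4) ℝ) 2, ← C_mul]; norm_num, one_mul]
  refine ⟨hbr, ?_, ?_, ?_⟩
  · subst hX3
    funext j
    fin_cases j <;> simp
  · rw [LinearIndependent.pair_iff]
    intro s t hst
    subst hX1 hX2
    have h0 := congrFun hst 0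
    have h1 := congrFun hst 1
    simp at h0 h1
    exact ⟨h0, h1⟩
  · intro I h1 h2 hcl
    have := hcl X2 h2
    rwa [hbr] at this
end

section
/- The set Lʳ of n × m real matrices of corank r (i.e., of rank q − r where q = min(n,m)) is a smooth submanifold of the space of n × m matrices, of codimension (n − q + r)(m − q + r). -/
open Matrix Module Set Function

set_option linter.unusedSectionVars false
set_option maxHeartbeats 1000000

section RankAux

variable {l m l' m' : Type*} [Fintype l] [Fintype m] [Fintype l'] [Fintype m']
  [DecidableEq l] [DecidableEq m] [DecidableEq l'] [DecidableEq m']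

lemma rank_submatrix_equiv (A : Matrix l m ℝ) (e₁ : l' ≃ l) (e₂ : m' ≃ m) :
    (A.submatrix e₁ e₂).rank = A.rank := by
  have h : (A.submatrix e₁ e₂).mulVecLin
      = (LinearMap.funLeft ℝ ℝ e₁).comp (A.mulVecLin.comp (LinearMap.funLeft ℝ ℝ e₂.symm)) := by
    apply LinearMap.ext; intro x
    simp [Matrix.mulVecLin_apply, Matrix.submatrix_mulVec_equiv, LinearMap.funLeft]
  rw [Matrix.rank, h, LinearMap.range_comp,
    LinearMap.range_comp_of_range_eq_top _ (LinearMap.range_eq_top.mpr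
      (LinearMap.funLeft_surjective_of_injective ℝ ℝ _ e₂.symm.injective))]
  rw [show LinearMap.funLeft ℝ ℝ e₁ = (LinearEquiv.funCongrLeft ℝ ℝ e₁ : (l → ℝ) →ₗ[ℝ] (l' → ℝ))
    from rfl]
  exact LinearEquiv.finrank_map_eq _ _

lemma finrank_submodule_prod {M N : Type*} [AddCommGroup M] [AddCommGroup N]
    [Module ℝ M] [Module ℝ N] [FiniteDimensional ℝ M] [FiniteDimensional ℝ N]
    (p : Submodule ℝ M) (q : Submodule ℝ N) :
    finrank ℝ (p.prod q) = finrank ℝ p + finrank ℝ q := by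
  let e : ↥(p.prod q) ≃ₗ[ℝ] ↥p × ↥q :=
    { toFun := fun z => (⟨z.val.1, z.prop.1⟩, ⟨z.val.2, z.prop.2⟩)
      map_add' := fun _ _ => rfl
      map_smul' := fun _ _ => rfl
      invFun := fun w => ⟨(w.1.val, w.2.val), ⟨w.1.prop, w.2.prop⟩⟩
      left_inv := fun _ => rfl
      right_inv := fun _ => rfl }
  rw [e.finrank_eq, Module.finrank_prod]

lemma range_prodMap' {M N M' N' : Type*} [AddCommGroup M] [AddCommGroup N]
    [AddCommGroup M'] [AddCommGroup N'] [Module ℝ M] [Module ℝ N] [Module ℝ M'] [Module ℝ N']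
    (f : M →ₗ[ℝ] M') (g : N →ₗ[ℝ] N') :
    LinearMap.range (f.prodMap g) = (LinearMap.range f).prod (LinearMap.range g) := by
  ext x
  constructor
  · rintro ⟨y, rfl⟩; exact ⟨⟨y.1, rfl⟩, ⟨y.2, rfl⟩⟩
  · rintro ⟨⟨y1, h1⟩, ⟨y2, h2⟩⟩
    exact ⟨(y1, y2), by simp [LinearMap.prodMap_apply, h1, h2, Prod.ext_iff]⟩

lemma rank_fromBlocks_diag (A : Matrix l m ℝ) (D : Matrix l' m' ℝ) :
    (Matrix.fromBlocks A 0 0 D).rank = A.rank + D.rank := by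
  classical
  let eL := LinearEquiv.sumArrowLequivProdArrow l l' ℝ ℝ
  let eM := LinearEquiv.sumArrowLequivProdArrow m m' ℝ ℝ
  have key : (Matrix.fromBlocks A 0 0 D).mulVecLin
      = (eL.symm : ((l → ℝ) × (l' → ℝ)) →ₗ[ℝ] (l ⊕ l' → ℝ)).comp
        ((A.mulVecLin.prodMap D.mulVecLin).comp (eM : (m ⊕ m' → ℝ) →ₗ[ℝ] (m → ℝ) × (m' → ℝ))) := by
    apply LinearMap.ext; intro x
    have hx : x = Sum.elim (x ∘ Sum.inl) (x ∘ Sum.inr) := (Sum.elim_comp_inl_inr x).symm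
    simp only [LinearMap.comp_apply, Matrix.mulVecLin_apply, LinearEquiv.coe_coe]
    rw [hx]
    rw [Matrix.fromBlocks_mulVec]
    simp [eL, eM, LinearEquiv.sumArrowLequivProdArrow, Equiv.sumArrowEquivProdArrow]
  rw [Matrix.rank, key, LinearMap.range_comp,
    LinearMap.range_comp_of_range_eq_top _ (LinearMap.range_eq_top.mpr eM.surjective)]
  rw [range_prodMap']
  rw [show (eL.symm : ((l → ℝ) × (l' → ℝ)) →ₗ[ℝ] (l ⊕ l' → ℝ)) = (eL.symm : _ ≃ₗ[ℝ] _) from rfl]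
  rw [LinearEquiv.finrank_map_eq]
  rw [finrank_submodule_prod]
  rfl

lemma matrix_rank_eq_zero_iff (A : Matrix l m ℝ) : A.rank = 0 ↔ A = 0 := by
  classical
  constructor
  · intro h
    have h0 : LinearMap.range A.mulVecLin = ⊥ := Submodule.finrank_eq_zero.mp h
    ext i j
    have : A.mulVecLin (Pi.single j 1) ∈ (⊥ : Submodule ℝ (l → ℝ)) := by
      rw [← h0]; exact LinearMap.mem_range_self _ _
    have h2 := congrFun (Submodule.mem_bot ℝ |>.mp this) i
    simpa [Matrix.mulVecLin_apply, Matrix.mulVec, dotProduct, Pi.single_apply] using h2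
  · rintro rfl; exact Matrix.rank_zero

end RankAux

section Smooth

variable {E : Type*} [NormedAddCommGroup E] [NormedSpace ℝ E]

lemma contDiff_det_entries {ι : Type*} [Fintype ι] [DecidableEq ι]
    {M : E → Matrix ι ι ℝ} (h : ∀ i j, ContDiff ℝ (⊤ : ℕ∞) fun x => M x i j) :
    ContDiff ℝ (⊤ : ℕ∞) fun x => (M x).det := by
  simp only [Matrix.det_apply]
  apply ContDiff.sum
  intro σ _
  have : ContDiff ℝ (⊤ : ℕ∞) fun x => ∏ i, M x (σ i) i :=
    contDiff_prod fun i _ => h (σ i) i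
  have h2 : (fun x => Equiv.Perm.sign σ • ∏ i, M x (σ i) i)
      = fun x => ((Equiv.Perm.sign σ : ℤ) : ℝ) * ∏ i, M x (σ i) i := by
    funext x; simp [Units.smul_def, zsmul_eq_mul]
  rw [h2]
  exact contDiff_const.mul this

end Smooth

section ExistsSub

lemma exists_indep_cols {p s k : ℕ} (A : Matrix (Fin p) (Fin s) ℝ) (h : A.rank = k) :
    ∃ f : Fin k → Fin s, Function.Injective f ∧
      LinearIndependent ℝ (fun j => Aᵀ (f j)) := by
  classical
  obtain ⟨b, hbsub, hbspan, hbli⟩ := exists_linearIndependent ℝ (Set.range Aᵀ)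
  have hfin : b.Finite := hbli.setFinite
  haveI : Fintype b := hfin.fintype
  have hcard : b.toFinset.card = k := by
    rw [← h, Matrix.rank_eq_finrank_span_cols]
    change _ = finrank ℝ (Submodule.span ℝ (range Aᵀ))
    rw [← hbspan, finrank_span_set_eq_card hbli]
  have hcard' : Fintype.card b = k := by rwa [Set.toFinset_card] at hcard
  let e : Fin k ≃ b := (Fintype.equivFinOfCardEq hcard').symm
  have hsel : ∀ j : Fin k, ∃ i : Fin s, Aᵀ i = (e j : Fin p → ℝ) := fun j => hbsub (e j).2
  choose f hf using hsel
  refine ⟨f, ?_, ?_⟩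
  · intro j₁ j₂ hj
    have : (e j₁ : Fin p → ℝ) = (e j₂ : Fin p → ℝ) := by rw [← hf, ← hf, hj]
    exact e.injective (Subtype.ext this)
  · have : (fun j => Aᵀ (f j)) = (fun x : b => (x : Fin p → ℝ)) ∘ e := by
      funext j; simp [hf]
    rw [this]
    exact hbli.comp e e.injective

lemma exists_invertible_submatrix {p s k : ℕ} (A : Matrix (Fin p) (Fin s) ℝ)
    (h : A.rank = k) :
    ∃ (e : Fin k → Fin p) (f : Fin k → Fin s), Function.Injective e ∧ Function.Injective f ∧
      IsUnit ((A.submatrix e f).det) := by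
  classical
  obtain ⟨f, hfinj, hfli⟩ := exists_indep_cols A h
  set A₁ : Matrix (Fin p) (Fin k) ℝ := A.submatrix id f with hA₁
  have hA₁rank : A₁.rank = k := by
    have : A₁ᵀ = fun j => Aᵀ (f j) := by
      funext j i; rfl
    rw [Matrix.rank_eq_finrank_span_cols]
    change finrank ℝ (Submodule.span ℝ (range A₁ᵀ)) = k
    rw [this, finrank_span_eq_card hfli, Fintype.card_fin]
  have hA₁t : (A₁ᵀ).rank = k := by rw [Matrix.rank_transpose, hA₁rank]
  obtain ⟨e, heinj, heli⟩ := exists_indep_cols A₁ᵀ hA₁t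
  refine ⟨e, f, heinj, hfinj, ?_⟩
  rw [← Matrix.isUnit_iff_isUnit_det]
  rw [← Matrix.linearIndependent_rows_iff_isUnit]
  have : (fun i => A.submatrix e f i) = fun i => A₁ᵀᵀ (e i) := by
    funext i j; rfl
  change LinearIndependent ℝ (fun i => A.submatrix e f i)
  rw [this]
  exact heli

end ExistsSub

/-- `S` is a smooth submanifold of codimension `c` of the normed space `E`:
locally around each of its points it is the zero set of a smooth submersion
into `ℝ^c`. -/
def IsSubmanifoldOfCodim {E : Type*} [NormedAddCommGroup E] [NormedSpace ℝ E]
    (S : Set E) (c : ℕ) : Prop :=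
  ∀ x ∈ S, ∃ (U : Set E) (f : E → (Fin c → ℝ)),
    IsOpen U ∧ x ∈ U ∧ ContDiffOn ℝ (⊤ : ℕ∞) f U ∧
    (∀ y ∈ U, (y ∈ S ↔ f y = 0)) ∧
    ∀ y ∈ U, Function.Surjective (fderiv ℝ f y) 

/-- The set `Lʳ` of real `n × m` matrices of corank `r` (rank `min n m - r`)
is a smooth submanifold of the space of `n × m` matrices of codimension
`(n - min n m + r) * (m - min n m + r)`. -/
theorem stmt_15 (n m r : ℕ) (hr : r ≤ min n m) :
    IsSubmanifoldOfCodim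
      {A : Fin n → Fin m → ℝ | (Matrix.of A).rank = min n m - r}
      ((n - min n m + r) * (m - min n m + r)) := by
  classical
  intro x hx
  set k := min n m - r with hk
  set a := n - min n m + r with ha
  set b := m - min n m + r with hb
  have hq1 : min n m ≤ n := Nat.min_le_left _ _
  have hq2 : min n m ≤ m := Nat.min_le_right _ _
  have hka : k + a = n := by omega
  have hkb : k + b = m := by omega
  -- choose an invertible k×k submatrix of x
  obtain ⟨e0, f0, he0, hf0, hdet0⟩ := exists_invertible_submatrix (Matrix.of x) hx
  -- build row and column equivs
  have hcard_e : Fintype.card ((Set.range e0)ᶜ : Set (Fin n)) = a := by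
    rw [Fintype.card_compl_set, Set.card_range_of_injective he0]
    simp [Fintype.card_fin]; omega
  have hcard_f : Fintype.card ((Set.range f0)ᶜ : Set (Fin m)) = b := by
    rw [Fintype.card_compl_set, Set.card_range_of_injective hf0]
    simp [Fintype.card_fin]; omega
  let gR : (Fin k ⊕ Fin a) ≃ Fin n :=
    (Equiv.sumCongr (Equiv.ofInjective e0 he0) (Fintype.equivFinOfCardEq hcard_e).symm).trans
      (Equiv.Set.sumCompl (Set.range e0))
  let gC : (Fin k ⊕ Fin b) ≃ Fin m :=
    (Equiv.sumCongr (Equiv.ofInjective f0 hf0) (Fintype.equivFinOfCardEq hcard_f).symm).trans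
      (Equiv.Set.sumCompl (Set.range f0))
  have hgR : ∀ i, gR (Sum.inl i) = e0 i := by
    intro i; simp [gR]
  have hgC : ∀ j, gC (Sum.inl j) = f0 j := by
    intro j; simp [gC]
  -- blocks
  let P : (Fin n → Fin m → ℝ) → Matrix (Fin k) (Fin k) ℝ :=
    fun B => Matrix.of fun i j => B (gR (Sum.inl i)) (gC (Sum.inl j))
  let Q : (Fin n → Fin m → ℝ) → Matrix (Fin k) (Fin b) ℝ :=
    fun B => Matrix.of fun i j => B (gR (Sum.inl i)) (gC (Sum.inr j))
  let Rm : (Fin n → Fin m → ℝ) → Matrix (Fin a) (Fin k) ℝ :=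
    fun B => Matrix.of fun i j => B (gR (Sum.inr i)) (gC (Sum.inl j))
  let Sm : (Fin n → Fin m → ℝ) → Matrix (Fin a) (Fin b) ℝ :=
    fun B => Matrix.of fun i j => B (gR (Sum.inr i)) (gC (Sum.inr j))
  have hblocks : ∀ B : (Fin n → Fin m → ℝ), (Matrix.of B).submatrix gR gC
      = Matrix.fromBlocks (P B) (Q B) (Rm B) (Sm B) := by
    intro B
    ext i j
    rcases i with i | i <;> rcases j with j | j <;> rfl
  -- the open set
  set U : Set (Fin n → Fin m → ℝ) := {B : (Fin n → Fin m → ℝ) | IsUnit (P B).det} with hU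
  have hcoord : ∀ (u : Fin n) (v : Fin m), ContDiff ℝ (⊤ : ℕ∞) fun B : (Fin n → Fin m → ℝ) => B u v := by
    intro u v
    exact ((ContinuousLinearMap.proj v).comp
      (ContinuousLinearMap.proj (R := ℝ) (φ := fun _ : Fin n => Fin m → ℝ) u)).contDiff
  have hdetP : ContDiff ℝ (⊤ : ℕ∞) fun B : (Fin n → Fin m → ℝ) => (P B).det :=
    contDiff_det_entries fun i j => hcoord _ _
  have hUopen : IsOpen U := by
    have hU' : U = (fun B : (Fin n → Fin m → ℝ) => (P B).det) ⁻¹' ({0}ᶜ) := by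
      ext B; simp [hU, isUnit_iff_ne_zero]
    rw [hU']
    exact isOpen_compl_singleton.preimage hdetP.continuous
  have hxU : x ∈ U := by
    have : P x = (Matrix.of x).submatrix e0 f0 := by
      ext i j
      simp [P, hgR, hgC, Matrix.submatrix_apply]
    simpa [hU, this] using hdet0
  -- the map F
  set F : (Fin n → Fin m → ℝ) → (Fin a → Fin b → ℝ) :=
    fun B i j => (P B).det * Sm B i j - ((Rm B) * (P B).adjugate * (Q B)) i j with hF
  have hFsmooth : ContDiff ℝ (⊤ : ℕ∞) F := by
    apply contDiff_pi.2; intro i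
    apply contDiff_pi.2; intro j
    apply ContDiff.sub
    · exact hdetP.mul (hcoord _ _)
    · have hadj : ∀ s t, ContDiff ℝ (⊤ : ℕ∞) fun B : (Fin n → Fin m → ℝ) => (P B).adjugate s t := by
        intro s t
        have : (fun B : (Fin n → Fin m → ℝ) => (P B).adjugate s t)
            = fun B : (Fin n → Fin m → ℝ) => ((P B).updateRow t (Pi.single s 1)).det := by
          funext B; rw [Matrix.adjugate_apply]
        rw [this]
        apply contDiff_det_entries
        intro i' j'
        by_cases hit : i' = t
        · simp only [Matrix.updateRow_apply, if_pos hit]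
          exact contDiff_const
        · simp only [Matrix.updateRow_apply, if_neg hit]
          exact hcoord _ _
      simp only [Matrix.mul_apply]
      apply ContDiff.sum; intro t _
      apply ContDiff.mul
      · apply ContDiff.sum; intro s _
        exact (hcoord _ _).mul (hadj s t)
      · exact hcoord _ _
  -- rank identity on U
  have hrankU : ∀ B ∈ U, (Matrix.of B).rank
      = k + (Sm B - Rm B * (P B)⁻¹ * Q B).rank := by
    intro B hB
    replace hB : IsUnit (P B).det := by rwa [hU, Set.mem_setOf_eq] at hB
    have h1 : (Matrix.of B).rank = ((Matrix.of B).submatrix gR gC).rank :=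
      (rank_submatrix_equiv _ gR gC).symm
    rw [h1, hblocks B]
    haveI := Matrix.invertibleOfIsUnitDet _ hB
    rw [Matrix.fromBlocks_eq_of_invertible₁₁ (P B) (Q B) (Rm B) (Sm B)]
    have hdetRt : IsUnit (Matrix.fromBlocks 1 (⅟(P B) * Q B) 0 (1 : Matrix (Fin b) (Fin b) ℝ)).det := by
      rw [Matrix.det_fromBlocks_zero₂₁]; simp
    have hdetL : IsUnit (Matrix.fromBlocks 1 (0 : Matrix (Fin k) (Fin a) ℝ) (Rm B * ⅟(P B)) 1).det := by
      rw [Matrix.det_fromBlocks_zero₁₂]; simp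
    rw [Matrix.rank_mul_eq_left_of_isUnit_det _ _ hdetRt]
    rw [Matrix.rank_mul_eq_right_of_isUnit_det _ _ hdetL]
    rw [rank_fromBlocks_diag]
    rw [Matrix.rank_of_isUnit _ ((Matrix.isUnit_iff_isUnit_det _).mpr hB)]
    rw [Fintype.card_fin, Matrix.invOf_eq_nonsing_inv]
  -- F = 0 iff Schur complement = 0, on U
  have hFW : ∀ B ∈ U, (F B = 0 ↔ Sm B - Rm B * (P B)⁻¹ * Q B = 0) := by
    intro B hB
    replace hB : IsUnit (P B).det := by rwa [hU, Set.mem_setOf_eq] at hB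
    have hd : (P B).det ≠ 0 := hB.ne_zero
    haveI := Matrix.invertibleOfIsUnitDet _ hB
    have hadj : Rm B * (P B).adjugate * Q B = (P B).det • (Rm B * (P B)⁻¹ * Q B) := by
      have : (P B).adjugate = (P B).det • (P B)⁻¹ := by
        rw [Matrix.inv_def, smul_smul, Ring.inverse_eq_inv', mul_inv_cancel₀ hd, one_smul]
      rw [this, Matrix.mul_smul, Matrix.smul_mul]
    have hFeq : F B = fun i j => (P B).det * (Sm B - Rm B * (P B)⁻¹ * Q B) i j := by
      funext i j
      simp only [hF, hadj, Matrix.smul_apply, smul_eq_mul, Matrix.sub_apply]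
      ring
    rw [hFeq]
    constructor
    · intro h0
      ext i j
      have h2 := congrFun (congrFun h0 i) j
      simp only [Pi.zero_apply] at h2
      have h3 := (mul_eq_zero.mp h2).resolve_left hd
      simpa using h3
    · intro h0
      funext i j
      rw [h0]
      simp
  -- the linear embedding G
  let Glin : (Fin a → Fin b → ℝ) →ₗ[ℝ] (Fin n → Fin m → ℝ) :=
    { toFun := fun H => fun u v =>
        Sum.elim (fun _ => (0:ℝ))
          (fun i => Sum.elim (fun _ => (0:ℝ)) (fun j => H i j) (gC.symm v)) (gR.symm u)
      map_add' := by
        intro H H'; funext u v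
        rcases hgu : gR.symm u with i | i <;> rcases hgv : gC.symm v with j | j <;>
          simp [hgu, hgv]
      map_smul' := by
        intro c H; funext u v
        rcases hgu : gR.symm u with i | i <;> rcases hgv : gC.symm v with j | j <;>
          simp [hgu, hgv] }
  have hGP : ∀ (H) (B : Fin n → Fin m → ℝ), P (B + Glin H) = P B := by
    intro H B; ext i j
    simp [P, Glin, Equiv.symm_apply_apply]
  have hGQ : ∀ (H) (B : Fin n → Fin m → ℝ), Q (B + Glin H) = Q B := by
    intro H B; ext i j
    simp [Q, Glin, Equiv.symm_apply_apply]
  have hGR : ∀ (H) (B : Fin n → Fin m → ℝ), Rm (B + Glin H) = Rm B := by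
    intro H B; ext i j
    simp [Rm, Glin, Equiv.symm_apply_apply]
  have hGS : ∀ (H) (B : Fin n → Fin m → ℝ), Sm (B + Glin H) = Sm B + Matrix.of H := by
    intro H B; ext i j
    simp [Sm, Glin, Equiv.symm_apply_apply]
  have hkey : ∀ (B : Fin n → Fin m → ℝ) (H), F (B + Glin H) = F B + (P B).det • H := by
    intro B H
    funext i j
    simp only [hF, hGP, hGQ, hGR, hGS, Pi.add_apply, Pi.smul_apply, smul_eq_mul,
      Matrix.add_apply, Matrix.of_apply]
    ring
  -- the codomain equivalence
  let ψ : (Fin a → Fin b → ℝ) ≃ₗ[ℝ] (Fin (a * b) → ℝ) :=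
    (LinearEquiv.curry ℝ ℝ (Fin a) (Fin b)).symm.trans
      (LinearEquiv.funCongrLeft ℝ ℝ finProdFinEquiv.symm)
  let ψc : (Fin a → Fin b → ℝ) ≃L[ℝ] (Fin (a * b) → ℝ) := ψ.toContinuousLinearEquiv
  refine ⟨U, fun B => ψc (F B), hUopen, hxU, ?_, ?_, ?_⟩
  · exact ((ψc.toContinuousLinearMap.contDiff).comp hFsmooth).contDiffOn
  · intro y hy
    have h1 : (Matrix.of y).rank = min n m - r ↔ F y = 0 := by
      rw [hrankU y hy, hFW y hy, ← hk]
      constructor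
      · intro h2
        have h3 : (Sm y - Rm y * (P y)⁻¹ * Q y).rank = 0 := by omega
        exact (matrix_rank_eq_zero_iff _).mp h3
      · intro h2; rw [h2, Matrix.rank_zero]; omega
    simp only [Set.mem_setOf_eq]
    rw [h1]
    constructor
    · intro h2; rw [h2]; simp
    · intro h2
      have := congrArg ψc.symm h2
      simpa using this
  · intro y hy
    have hy' : IsUnit (P y).det := by rwa [hU, Set.mem_setOf_eq] at hy
    have hd : (P y).det ≠ 0 := hy'.ne_zero
    have hFdiff : DifferentiableAt ℝ F y := (hFsmooth.differentiable (by simp)).differentiableAt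
    let Gc : (Fin a → Fin b → ℝ) →L[ℝ] (Fin n → Fin m → ℝ) := LinearMap.toContinuousLinearMap Glin
    set c : ℝ := (P y).det with hc
    -- compute the derivative along Glin directions
    have hder : ∀ H, fderiv ℝ F y (Glin H) = c • H := by
      intro H
      have hGcoe : ∀ H', Gc H' = Glin H' := fun _ => rfl
      set φ : (Fin a → Fin b → ℝ) → (Fin a → Fin b → ℝ) := fun H' => F (y + Gc H') with hφ
      have d2 : fderiv ℝ φ 0 = (fderiv ℝ F y).comp Gc := by
        have hcmp : φ = F ∘ (fun H' => y + Gc H') := rfl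
        rw [hcmp, fderiv_comp 0 (by simpa using hFdiff) ((Gc.differentiableAt).const_add y)]
        congr 1
        · simp
        · rw [fderiv_const_add]
          exact Gc.fderiv
      have hφ1 : φ = fun H' => F y + c • H' := by
        funext H'
        rw [hφ]
        exact hkey y H'
      have d3 : fderiv ℝ φ 0 = c • (ContinuousLinearMap.id ℝ (Fin a → Fin b → ℝ)) := by
        have hφ2 : φ = fun H' => F y +
            (c • ContinuousLinearMap.id ℝ (Fin a → Fin b → ℝ)) H' := by
          funext H'; rw [hφ]; exact hkey y H'
        rw [hφ2, fderiv_const_add]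
        exact ContinuousLinearMap.fderiv _
      have := d2.symm.trans d3
      have h4 := congrFun (congrArg (fun (L : (Fin a → Fin b → ℝ) →L[ℝ] (Fin a → Fin b → ℝ)) => (L : (Fin a → Fin b → ℝ) → (Fin a → Fin b → ℝ))) this) H
      simpa [hGcoe] using h4
    intro v
    refine ⟨Glin (c⁻¹ • (ψc.symm v)), ?_⟩
    have hcomp : fderiv ℝ (fun B => ψc (F B)) y = (ψc : (Fin a → Fin b → ℝ) →L[ℝ] _).comp (fderiv ℝ F y) := by
      exact ψc.comp_fderiv
    rw [hcomp]
    simp only [ContinuousLinearMap.comp_apply, hder]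
    rw [smul_smul, mul_inv_cancel₀ hd, one_smul]
    simp
end
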